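/- arXiv:1802.06410 — 3 statements merged into one kernel-verified Lean document; each statement's English description precedes it below -/
import Mathlib

section
/- Let v : [0,∞) → ℝ be continuously differentiable with v(t) ≥ 0 for all t ≥ 0, and suppose v'(t) ≤ -α v(t) + β √(v(t)) for some α, β > 0. Then for all t ≥ 0, v(t) ≤ (√(v(0)) e^{-α t/2} + β/α)². -/
/-!
For every `K > β / α` the squared profile `u² = (c e^{-αx/2} + K)²` with `c = √(v 0)` is a strict
supersolution: `(u²)' = -α u² + α K u > -α u² + β u` wherever `u > 0`. So `v` can never cross it
from below, and letting `K` decrease to `β / α` gives the bound.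
-/

open Real Set Filter Topology

noncomputable section

/-- The solution of `u' = -(α / 2) (u - K)` with `u 0 = c + K`. -/
def decayProfile (α c K x : ℝ) : ℝ := c * exp (-α * x / 2) + K

section

variable {α c K : ℝ}

lemma decayProfile_zero : decayProfile α c K 0 = c + K := by
  simp [decayProfile]

lemma decayProfile_pos (hc : 0 ≤ c) (hK : 0 < K) (x : ℝ) : 0 < decayProfile α c K x := by
  unfold decayProfile
  positivity

lemma hasDerivAt_decayProfile_sq (x : ℝ) :
    HasDerivAt (fun y ↦ decayProfile α c K y ^ 2)
      (-α * decayProfile α c K x ^ 2 + α * K * decayProfile α c K x) x := by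
  have hexp : HasDerivAt (fun y ↦ exp (-α * y / 2)) (exp (-α * x / 2) * (-α / 2)) x :=
    (hasDerivAt_exp _).comp x (((hasDerivAt_id x).const_mul (-α)).div_const 2 |>.congr_deriv
      (by ring))
  have hu : HasDerivAt (decayProfile α c K) (c * (exp (-α * x / 2) * (-α / 2))) x :=
    (hexp.const_mul c).add_const K
  refine (hu.fun_pow 2).congr_deriv ?_
  simp only [decayProfile]
  ring

lemma le_decayProfile_sq {β t : ℝ} {v : ℝ → ℝ} (hv : Differentiable ℝ v)
    (hineq : ∀ x ∈ Ico 0 t, deriv v x ≤ -α * v x + β * √(v x))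
    (hc : 0 ≤ c) (hK : 0 < K) (hβK : β < α * K) (h0 : v 0 ≤ (c + K) ^ 2) (ht : 0 ≤ t) :
    v t ≤ decayProfile α c K t ^ 2 := by
  refine image_le_of_deriv_right_lt_deriv_boundary hv.continuous.continuousOn
    (fun x _ ↦ (hv x).hasDerivAt.hasDerivWithinAt) (by rwa [decayProfile_zero])
    hasDerivAt_decayProfile_sq (fun x hx hvx ↦ ?_) (right_mem_Icc.2 ht)
  have hu := decayProfile_pos (α := α) hc hK x
  have hsqrt : √(v x) = decayProfile α c K x := by rw [hvx, sqrt_sq hu.le]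
  have hβu : β * decayProfile α c K x < α * K * decayProfile α c K x :=
    mul_lt_mul_of_pos_right hβK hu
  calc deriv v x ≤ -α * v x + β * √(v x) := hineq x hx
    _ < _ := by rw [hsqrt, hvx]; linarith

end

end

theorem gronwall_sqrt_bound_decay_general (α β : ℝ) (hα : 0 < α) (hβ : 0 < β)
    (v : ℝ → ℝ) (hv : ContDiff ℝ 1 v)
    (hineq : ∀ t, 0 ≤ t → deriv v t ≤ -α * v t + β * Real.sqrt (v t)) :
    ∀ t, 0 ≤ t → v t ≤ (Real.sqrt (v 0) * Real.exp (-α * t / 2) + β / α) ^ 2 := by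
  intro t ht
  have hbarrier : ∀ K ∈ Ioi (β / α), v t ≤ (√(v 0) * exp (-α * t / 2) + K) ^ 2 := by
    intro K hK
    have hK0 : 0 < K := (div_pos hβ hα).trans hK
    have hv0 : v 0 ≤ (√(v 0) + K) ^ 2 :=
      calc v 0 ≤ √(v 0) ^ 2 := sq_sqrt' ▸ le_max_left _ _
        _ ≤ (√(v 0) + K) ^ 2 := by gcongr; linarith
    exact le_decayProfile_sq (hv.differentiable one_ne_zero) (fun x hx ↦ hineq x hx.1)
      (sqrt_nonneg _) hK0 ((div_lt_iff₀' hα).1 hK) hv0 ht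
  have hcont : Continuous fun K ↦ (√(v 0) * exp (-α * t / 2) + K) ^ 2 := by fun_prop
  exact ge_of_tendsto (hcont.tendsto _ |>.mono_left nhdsWithin_le_nhds)
    (eventually_nhdsWithin_of_forall hbarrier)

/-- If v is C¹, nonnegative, and v' ≤ -αv + β√v with α, β > 0, then
    v(t) ≤ (√(v(0)) e^{-αt/2} + β/α)² for all t ≥ 0. -/
theorem gronwall_sqrt_bound_decay (α β : ℝ) (hα : 0 < α) (hβ : 0 < β)
    (v : ℝ → ℝ) (hv : ContDiff ℝ 1 v) (hvpos : ∀ t, 0 ≤ t → 0 ≤ v t)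
    (hineq : ∀ t, 0 ≤ t → deriv v t ≤ -α * v t + β * Real.sqrt (v t)) :
    ∀ t, 0 ≤ t → v t ≤ (Real.sqrt (v 0) * Real.exp (-α * t / 2) + β / α) ^ 2 :=
  gronwall_sqrt_bound_decay_general α β hα hβ v hv hineq
end

section
/- Let F(x,y) = (x(a - (x²+y²)) - ω y, y(a - (x²+y²)) + ω x) be the Stuart-Landau vector field on ℝ², and let q_{(x,y),ϖ I} be the density of a 2-dimensional Gaussian with mean (x,y) and covariance matrix ϖ² I (ϖ > 0). Then the Gaussian average ∫_{ℝ²} F(u) q_{(x,y), ϖ² I}(u) du equals the Stuart-Landau vector field with parameter a replaced by a - 4ϖ²: namely ( x(a - 4ϖ² - (x²+y²)) - ω y, y(a - 4ϖ² - (x²+y²)) + ω x ). -/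
/-!
The isotropic Gaussian density is that of the product measure `N(x, ϖ²) ⊗ N(y, ϖ²)`, under
which every component of the Stuart–Landau field is a cubic polynomial in the two independent
coordinates, so its mean only involves the Gaussian moments `E[X] = μ`, `E[X²] = μ² + v` and
`E[X³] = μ³ + 3μv`. The cubic term gives `E[u₁ (u₁² + u₂²)] = x (x² + 3ϖ²) + x (y² + ϖ²)`,
which is where `a` gets shifted by `4ϖ²`.
-/

open MeasureTheory Real
open scoped NNReal

namespace ProbabilityTheory

section Moments

variable {μ : ℝ} {v : ℝ≥0}

lemma integrable_pow_gaussianReal (n : ℕ) : Integrable (fun x ↦ x ^ n) (gaussianReal μ v) :=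
  (memLp_id_gaussianReal n).integrable_norm_pow'.mono' (by fun_prop)
    (ae_of_all _ fun x ↦ by simp [norm_pow])

lemma integral_sq_gaussianReal : ∫ x, x ^ 2 ∂gaussianReal μ v = μ ^ 2 + v := by
  have h := variance_eq_sub (memLp_id_gaussianReal (μ := μ) (v := v) 2)
  simp only [variance_id_gaussianReal, id, Pi.pow_apply, integral_id_gaussianReal] at h
  linarith

/-- Odd central moments vanish, since `x ↦ -x` preserves the centered Gaussian. -/
lemma integral_sub_pow_gaussianReal_of_odd {n : ℕ} (hn : Odd n) :
    ∫ x, (x - μ) ^ n ∂gaussianReal μ v = 0 := by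
  have hcenter : ∫ x, (x - μ) ^ n ∂gaussianReal μ v = ∫ x, x ^ n ∂gaussianReal 0 v := by
    rw [← sub_self μ, ← gaussianReal_map_sub_const, integral_map (by fun_prop) (by fun_prop)]
  have hneg : ∫ x, x ^ n ∂gaussianReal 0 v = ∫ x, (-x) ^ n ∂gaussianReal 0 v := by
    conv_lhs => rw [← neg_zero, ← gaussianReal_map_neg, integral_map (by fun_prop) (by fun_prop)]
  simp only [hn.neg_pow, integral_neg] at hneg
  linarith

lemma integral_pow_three_gaussianReal : ∫ x, x ^ 3 ∂gaussianReal μ v = μ ^ 3 + 3 * μ * v := by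
  have hint (n : ℕ) := integrable_pow_gaussianReal (μ := μ) (v := v) n
  have hcube := integral_sub_pow_gaussianReal_of_odd (μ := μ) (v := v) (n := 3) (by decide)
  have hexpand : (fun x : ℝ ↦ (x - μ) ^ 3) =
      fun x ↦ x ^ 3 - 3 * μ * x ^ 2 + 3 * μ ^ 2 * x ^ 1 - μ ^ 3 := by
    ext x; ring
  rw [hexpand, integral_sub, integral_add, integral_sub, integral_const_mul, integral_const_mul,
    integral_sq_gaussianReal] at hcube
  · simp only [pow_one, integral_id_gaussianReal, integral_const, probReal_univ, one_smul] at hcube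
    linarith
  all_goals fun_prop

end Moments

lemma integral_prod_gaussianReal_eq_integral_smul {E : Type*} [NormedAddCommGroup E]
    [NormedSpace ℝ E] {μ₁ μ₂ : ℝ} {v₁ v₂ : ℝ≥0} (hv₁ : v₁ ≠ 0) (hv₂ : v₂ ≠ 0) (f : ℝ × ℝ → E) :
    ∫ u, f u ∂(gaussianReal μ₁ v₁).prod (gaussianReal μ₂ v₂) =
      ∫ u, (gaussianPDFReal μ₁ v₁ u.1 * gaussianPDFReal μ₂ v₂ u.2) • f u := by
  rw [gaussianReal_of_var_ne_zero _ hv₁, gaussianReal_of_var_ne_zero _ hv₂,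
    prod_withDensity (measurable_gaussianPDF _ _) (measurable_gaussianPDF _ _),
    ← Measure.volume_eq_prod, integral_withDensity_eq_integral_toReal_smul (by fun_prop)
      (ae_of_all _ fun _ ↦ ENNReal.mul_lt_top gaussianPDF_lt_top gaussianPDF_lt_top)]
  simp [toReal_gaussianPDF]

lemma gaussianPDFReal_mul_gaussianPDFReal (μ₁ μ₂ : ℝ) (v : ℝ≥0) (s t : ℝ) :
    gaussianPDFReal μ₁ v s * gaussianPDFReal μ₂ v t =
      (2 * π * v)⁻¹ * exp (-(((s - μ₁) ^ 2 + (t - μ₂) ^ 2) / (2 * v))) := by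
  have hsqrt : (2 * π * v)⁻¹ = (√(2 * π * v))⁻¹ * (√(2 * π * v))⁻¹ := by
    rw [← mul_inv, Real.mul_self_sqrt (by positivity)]
  simp only [gaussianPDFReal_def]
  rw [hsqrt, mul_mul_mul_comm, ← exp_add]
  congr 2
  ring

end ProbabilityTheory

open ProbabilityTheory

def stuartLandau (a ω : ℝ) (u : ℝ × ℝ) : ℝ × ℝ :=
  (u.1 * (a - (u.1 ^ 2 + u.2 ^ 2)) - ω * u.2, u.2 * (a - (u.1 ^ 2 + u.2 ^ 2)) + ω * u.1)

lemma integral_stuartLandau_gaussianReal_prod (a ω x y : ℝ) (v : ℝ≥0) :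
    ∫ u, stuartLandau a ω u ∂(gaussianReal x v).prod (gaussianReal y v) =
      stuartLandau (a - 4 * v) ω (x, y) := by
  set P := (gaussianReal x v).prod (gaussianReal y v)
  have hint (i j : ℕ) : Integrable (fun u : ℝ × ℝ ↦ u.1 ^ i * u.2 ^ j) P :=
    (integrable_pow_gaussianReal i).mul_prod (integrable_pow_gaussianReal j)
  have hmom (i j : ℕ) : ∫ u, u.1 ^ i * u.2 ^ j ∂P =
      (∫ s, s ^ i ∂gaussianReal x v) * ∫ t, t ^ j ∂gaussianReal y v :=
    integral_prod_mul _ _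
  have hpoly₁ : (fun u ↦ (stuartLandau a ω u).1) = fun u ↦
      a * (u.1 ^ 1 * u.2 ^ 0) - u.1 ^ 3 * u.2 ^ 0 - u.1 ^ 1 * u.2 ^ 2 - ω * (u.1 ^ 0 * u.2 ^ 1) := by
    ext u; simp only [stuartLandau]; ring
  have hpoly₂ : (fun u ↦ (stuartLandau a ω u).2) = fun u ↦
      a * (u.1 ^ 0 * u.2 ^ 1) - u.1 ^ 0 * u.2 ^ 3 - u.1 ^ 2 * u.2 ^ 1 + ω * (u.1 ^ 1 * u.2 ^ 0) := by
    ext u; simp only [stuartLandau]; ring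
  rw [integral_pair (by rw [hpoly₁]; fun_prop) (by rw [hpoly₂]; fun_prop), hpoly₁, hpoly₂]
  simp (disch := fun_prop) only [integral_add, integral_sub, integral_const_mul, hmom]
  simp only [pow_zero, pow_one, integral_const, probReal_univ, one_smul, integral_id_gaussianReal,
    integral_sq_gaussianReal, integral_pow_three_gaussianReal, stuartLandau]
  ext <;> ring

theorem stuart_landau_gaussian_average_general (a ω x y ϖ : ℝ) (hϖ : 0 < ϖ) :
    (∫ u : ℝ × ℝ,
        ((2 * π * ϖ ^ 2)⁻¹ *
            Real.exp (-(((u.1 - x) ^ 2 + (u.2 - y) ^ 2) / (2 * ϖ ^ 2)))) •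
          ((u.1 * (a - (u.1 ^ 2 + u.2 ^ 2)) - ω * u.2,
            u.2 * (a - (u.1 ^ 2 + u.2 ^ 2)) + ω * u.1) : ℝ × ℝ)) =
      ((x * (a - 4 * ϖ ^ 2 - (x ^ 2 + y ^ 2)) - ω * y,
        y * (a - 4 * ϖ ^ 2 - (x ^ 2 + y ^ 2)) + ω * x) : ℝ × ℝ) := by
  let v : ℝ≥0 := ⟨ϖ ^ 2, sq_nonneg ϖ⟩
  have hv : v ≠ 0 := by
    rw [← NNReal.coe_ne_zero]
    exact (pow_pos hϖ 2).ne'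
  have h := integral_stuartLandau_gaussianReal_prod a ω x y v
  simp only [integral_prod_gaussianReal_eq_integral_smul hv hv,
    gaussianPDFReal_mul_gaussianPDFReal] at h
  exact h

/-- The Gaussian average (mean (x,y), covariance ϖ²I) of the Stuart-Landau vector field
    F(u₁,u₂) = (u₁(a-(u₁²+u₂²)) - ωu₂, u₂(a-(u₁²+u₂²)) + ωu₁) is the Stuart-Landau field
    with parameter a replaced by a - 4ϖ². -/
theorem stuart_landau_gaussian_average (a ω x y ϖ : ℝ) (ha : 0 < a) (hϖ : 0 < ϖ) :
    (∫ u : ℝ × ℝ,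
        ((2 * π * ϖ ^ 2)⁻¹ *
            Real.exp (-(((u.1 - x) ^ 2 + (u.2 - y) ^ 2) / (2 * ϖ ^ 2)))) •
          ((u.1 * (a - (u.1 ^ 2 + u.2 ^ 2)) - ω * u.2,
            u.2 * (a - (u.1 ^ 2 + u.2 ^ 2)) + ω * u.1) : ℝ × ℝ)) =
      ((x * (a - 4 * ϖ ^ 2 - (x ^ 2 + y ^ 2)) - ω * y,
        y * (a - 4 * ϖ ^ 2 - (x ^ 2 + y ^ 2)) + ω * x) : ℝ × ℝ) :=
  stuart_landau_gaussian_average_general a ω x y ϖ hϖ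
end

section
/- Let θ ∈ (0,1), let K and σ be diagonal d×d matrices with positive diagonal entries, and let w_θ(x) = exp((θ/2) x·Kσ^{-2}x). For any u ∈ H¹(w_θ) (i.e., u and ∇u square-integrable against weight w_θ), the function x ↦ σ^{-1}Kx·u(x) belongs to L²(w_θ) and ‖σ^{-1}Kx u‖_{L²(w_θ)} ≤ (2/θ) ‖σ∇u‖_{L²(w_θ)}. -/
/-!
If `∂ᵥ w = c ℓ w` for a linear form `ℓ` with `ℓ v ≥ 0`, integrating by parts against `w` gives
`c ∫ ℓ² u² w = ∫ ℓ u² ∂ᵥ w = -∫ (ℓ(v) u² + 2 ℓ u ∂ᵥu) w ≤ 2 ‖ℓ u‖ ‖∂ᵥ u‖` in `L²(w)`,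
hence `‖ℓ u‖ ≤ (2 / c) ‖∂ᵥ u‖`. For the Gaussian-type weight `w_θ` this applies coordinatewise
with `ℓ x = Kᵢ xᵢ / σᵢ`, `v = σᵢ eᵢ`, `c = θ`, and the theorem follows by summing over `i`.

Since `∫ ℓ² u² w` is not known to be finite in advance, `ℓ` is first replaced by
`dampedId a ∘ ℓ` with `dampedId a t = t / (1 + a t²)`: the bound `t · dampedId a t ≤ 1 / a` makes
every integral finite, and the derivative defect `-dampedIdDeriv a t ≤ a · t · dampedId a t` is
absorbed into the left-hand side. Fatou's lemma then lets `a → 0`.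
-/

open MeasureTheory Real Filter Topology

noncomputable def dampedId (a t : ℝ) : ℝ := t / (1 + a * t ^ 2)

noncomputable def dampedIdDeriv (a t : ℝ) : ℝ := (1 - a * t ^ 2) / (1 + a * t ^ 2) ^ 2

section dampedId

variable {a : ℝ}

lemma hasDerivAt_dampedId (ha : 0 ≤ a) (t : ℝ) :
    HasDerivAt (dampedId a) (dampedIdDeriv a t) t := by
  have hd := (hasDerivAt_id' t).fun_div (((hasDerivAt_pow 2 t).const_mul a).const_add 1)
    (by positivity)
  exact hd.congr_deriv (by rw [dampedIdDeriv]; norm_num; ring)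

lemma differentiable_dampedId (ha : 0 ≤ a) : Differentiable ℝ (dampedId a) :=
  fun t => (hasDerivAt_dampedId ha t).differentiableAt

lemma continuous_dampedIdDeriv (ha : 0 ≤ a) : Continuous (dampedIdDeriv a) :=
  (by fun_prop : Continuous fun t : ℝ => 1 - a * t ^ 2).div (by fun_prop) fun t => by positivity

lemma mul_dampedId (t : ℝ) : t * dampedId a t = t ^ 2 / (1 + a * t ^ 2) := by
  rw [dampedId, mul_div_assoc', sq]

lemma mul_dampedId_nonneg (ha : 0 ≤ a) (t : ℝ) : 0 ≤ t * dampedId a t := by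
  rw [mul_dampedId]; positivity

lemma mul_dampedId_le (ha : 0 < a) (t : ℝ) : t * dampedId a t ≤ a⁻¹ := by
  rw [mul_dampedId, div_le_iff₀ (by positivity)]
  field_simp
  nlinarith

lemma dampedId_sq_le (ha : 0 ≤ a) (t : ℝ) : dampedId a t ^ 2 ≤ t * dampedId a t := by
  have h : 0 < 1 + a * t ^ 2 := by positivity
  rw [mul_dampedId, dampedId, div_pow, div_le_div_iff₀ (by positivity) h]
  have h0 : 0 ≤ a * t ^ 2 := by positivity
  nlinarith [mul_nonneg (mul_nonneg (sq_nonneg t) h.le) h0]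

lemma abs_dampedId_le (ha : 0 < a) (t : ℝ) : |dampedId a t| ≤ 1 + a⁻¹ := by
  have h : 0 < 1 + a * t ^ 2 := by positivity
  rw [dampedId, abs_div, abs_of_pos h, div_le_iff₀ h]
  have : a * a⁻¹ = 1 := mul_inv_cancel₀ ha.ne'
  have ht : |t| ≤ 1 + t ^ 2 := by nlinarith [sq_abs t, sq_nonneg (|t| - 1)]
  nlinarith [inv_pos.2 ha, mul_nonneg ha.le (sq_nonneg t)]

lemma abs_dampedIdDeriv_le (ha : 0 ≤ a) (t : ℝ) : |dampedIdDeriv a t| ≤ 1 := by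
  have h : 0 < 1 + a * t ^ 2 := by positivity
  have h0 : 0 ≤ a * t ^ 2 := by positivity
  rw [dampedIdDeriv, abs_div, abs_of_pos (pow_pos h 2), div_le_one (pow_pos h 2), abs_le]
  constructor <;> nlinarith

lemma neg_dampedIdDeriv_le (ha : 0 ≤ a) (t : ℝ) :
    -dampedIdDeriv a t ≤ a * (t * dampedId a t) := by
  have h : 0 < 1 + a * t ^ 2 := by positivity
  have h0 : 0 ≤ a * t ^ 2 := by positivity
  rw [dampedIdDeriv, mul_dampedId, ← neg_div, mul_div_assoc', div_le_div_iff₀ (by positivity) h]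
  nlinarith [mul_nonneg h0 h0]

lemma tendsto_mul_dampedId {a : ℕ → ℝ} (ha : Tendsto a atTop (𝓝 0)) (t : ℝ) :
    Tendsto (fun n => t * dampedId (a n) t) atTop (𝓝 (t ^ 2)) := by
  simp_rw [mul_dampedId]
  have h := ((ha.mul_const (t ^ 2)).const_add 1).inv₀ (by norm_num)
  simpa [div_eq_mul_inv] using h.const_mul (t ^ 2)

lemma neg_dampedIdDeriv_mul_add_le {κ ε : ℝ} (ha : 0 ≤ a) (hκ : 0 ≤ κ) (hε : 0 < ε)
    (t p q : ℝ) :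
    -(dampedIdDeriv a t * κ * p ^ 2 + dampedId a t * (2 * p * q)) ≤
      (κ * a + ε) * (t * dampedId a t * p ^ 2) + q ^ 2 / ε := by
  have hderiv := mul_le_mul_of_nonneg_right (neg_dampedIdDeriv_le ha t)
    (mul_nonneg hκ (sq_nonneg p))
  have hsq := mul_le_mul_of_nonneg_left (dampedId_sq_le ha t)
    (mul_nonneg hε.le (sq_nonneg p))
  have hyoung : 0 ≤ (ε * dampedId a t * p + q) ^ 2 / ε := by positivity
  have hexpand : (ε * dampedId a t * p + q) ^ 2 / ε =
      ε * dampedId a t ^ 2 * p ^ 2 + 2 * dampedId a t * p * q + q ^ 2 / ε := by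
    field_simp
    ring
  linarith

lemma abs_dampedIdDeriv_mul_add_le {κ : ℝ} (ha : 0 < a) (hκ : 0 ≤ κ) (t p q : ℝ) :
    |dampedIdDeriv a t * κ * p ^ 2 + dampedId a t * (2 * p * q)| ≤
      (κ + a⁻¹) * p ^ 2 + q ^ 2 := by
  have hderiv : |dampedIdDeriv a t * κ * p ^ 2| ≤ κ * p ^ 2 := by
    rw [abs_mul, abs_mul, abs_of_nonneg hκ, abs_of_nonneg (sq_nonneg p), mul_assoc]
    exact mul_le_of_le_one_left (by positivity) (abs_dampedIdDeriv_le ha.le t)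
  have hsq : dampedId a t ^ 2 ≤ a⁻¹ := (dampedId_sq_le ha.le t).trans (mul_dampedId_le ha t)
  have hcross : |dampedId a t * (2 * p * q)| ≤ a⁻¹ * p ^ 2 + q ^ 2 := by
    rw [abs_le]
    constructor <;> nlinarith [sq_nonneg (dampedId a t * p + q), sq_nonneg (dampedId a t * p - q),
      mul_le_mul_of_nonneg_right hsq (sq_nonneg p)]
  calc _ ≤ _ := abs_add_le _ _
    _ ≤ _ := add_le_add hderiv hcross
    _ = _ := by ring

end dampedId

theorem integrable_and_integral_le_of_tendsto {α : Type*} [MeasurableSpace α] {μ : Measure α}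
    {f : ℕ → α → ℝ} {F : α → ℝ} {b : ℕ → ℝ} {L : ℝ}
    (hf : ∀ n, Integrable (f n) μ) (hf0 : ∀ n, 0 ≤ᵐ[μ] f n)
    (hfF : ∀ᵐ x ∂μ, Tendsto (fun n => f n x) atTop (𝓝 (F x)))
    (hfb : ∀ n, ∫ x, f n x ∂μ ≤ b n) (hbL : Tendsto b atTop (𝓝 L)) :
    Integrable F μ ∧ ∫ x, F x ∂μ ≤ L := by
  have hF0 : 0 ≤ᵐ[μ] F := by
    filter_upwards [hfF, ae_all_iff.2 hf0] with x hx hx0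
    exact ge_of_tendsto' hx hx0
  have hfatou : ∫⁻ x, ENNReal.ofReal (F x) ∂μ ≤ ENNReal.ofReal L :=
    calc ∫⁻ x, ENNReal.ofReal (F x) ∂μ
        = ∫⁻ x, liminf (fun n => ENNReal.ofReal (f n x)) atTop ∂μ := by
          refine lintegral_congr_ae ?_
          filter_upwards [hfF] with x hx
          exact ((ENNReal.continuous_ofReal.tendsto _).comp hx).liminf_eq.symm
      _ ≤ liminf (fun n => ∫⁻ x, ENNReal.ofReal (f n x) ∂μ) atTop :=
          lintegral_liminf_le' fun n => (hf n).1.aemeasurable.ennreal_ofReal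
      _ ≤ liminf (fun n => ENNReal.ofReal (b n)) atTop := by
          refine liminf_le_liminf (.of_forall fun n => ?_)
          rw [← ofReal_integral_eq_lintegral_ofReal (hf n) (hf0 n)]
          exact ENNReal.ofReal_le_ofReal (hfb n)
      _ = ENNReal.ofReal L := ((ENNReal.continuous_ofReal.tendsto _).comp hbL).liminf_eq
  have hFi : Integrable F μ :=
    ⟨aestronglyMeasurable_of_tendsto_ae _ (fun n => (hf n).1) hfF,
      (hasFiniteIntegral_iff_ofReal hF0).2 (hfatou.trans_lt ENNReal.ofReal_lt_top)⟩
  have hL : 0 ≤ L := ge_of_tendsto' hbL fun n => (integral_nonneg_of_ae (hf0 n)).trans (hfb n)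
  refine ⟨hFi, ?_⟩
  rwa [← ENNReal.ofReal_le_ofReal_iff hL, ofReal_integral_eq_lintegral_ofReal hFi hF0]

section WeightedHardy

variable {E : Type*} [NormedAddCommGroup E] [NormedSpace ℝ E]
  {ℓ : E →L[ℝ] ℝ} {v : E} {a c : ℝ} {w u : E → ℝ}

lemma fderiv_dampedId_comp_mul_sq_apply (ha : 0 ≤ a) (hu : Differentiable ℝ u) (x : E) :
    fderiv ℝ (fun y => dampedId a (ℓ y) * u y ^ 2) x v =
      dampedIdDeriv a (ℓ x) * ℓ v * u x ^ 2 + dampedId a (ℓ x) * (2 * u x * fderiv ℝ u x v) := by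
  have hd := ((hasDerivAt_dampedId ha (ℓ x)).comp_hasFDerivAt x ℓ.hasFDerivAt).fun_mul
    ((hu x).hasFDerivAt.pow 2)
  change fderiv ℝ (fun y => (dampedId a ∘ ℓ) y * u y ^ 2) x v = _
  rw [hd.fderiv]
  simp only [add_apply, smul_apply, smul_eq_mul, nsmul_eq_mul, Function.comp_apply]
  push_cast
  ring

variable [MeasurableSpace E] [BorelSpace E] {μ : Measure E}

lemma integrable_mul_dampedId_mul (ha : 0 < a) {g : E → ℝ} (hg : Integrable g μ) :
    Integrable (fun x => ℓ x * dampedId a (ℓ x) * g x) μ := by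
  refine hg.bdd_mul (c := a⁻¹) ?_ (.of_forall fun x => ?_)
  · exact (ℓ.continuous.mul ((differentiable_dampedId ha.le).continuous.comp
      ℓ.continuous)).aestronglyMeasurable
  · rw [Real.norm_eq_abs, abs_of_nonneg (mul_dampedId_nonneg ha.le _)]
    exact mul_dampedId_le ha _

lemma integrable_dampedIdDeriv_mul_add_mul (ha : 0 < a) (hℓv : 0 ≤ ℓ v) (hw : Continuous w)
    (hw0 : ∀ x, 0 ≤ w x) (hu : Differentiable ℝ u)
    (hu2 : Integrable (fun x => u x ^ 2 * w x) μ)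
    (hdu : Integrable (fun x => fderiv ℝ u x v ^ 2 * w x) μ) :
    Integrable (fun x => (dampedIdDeriv a (ℓ x) * ℓ v * u x ^ 2 +
      dampedId a (ℓ x) * (2 * u x * fderiv ℝ u x v)) * w x) μ := by
  refine ((hu2.const_mul (ℓ v + a⁻¹)).add hdu).mono' ?_ (.of_forall fun x => ?_)
  · have := (differentiable_dampedId ha.le).continuous
    have := continuous_dampedIdDeriv ha.le
    have := measurable_fderiv_apply_const ℝ u v
    have := hu.continuous
    fun_prop
  · rw [Real.norm_eq_abs, abs_mul, abs_of_nonneg (hw0 x)]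
    calc _ ≤ ((ℓ v + a⁻¹) * u x ^ 2 + fderiv ℝ u x v ^ 2) * w x :=
          mul_le_mul_of_nonneg_right (abs_dampedIdDeriv_mul_add_le ha hℓv _ _ _) (hw0 x)
      _ = _ := by simp only [Pi.add_apply]; ring

variable [FiniteDimensional ℝ E] [μ.IsAddHaarMeasure]

lemma mul_integral_mul_dampedId_eq (ha : 0 < a) (hℓv : 0 ≤ ℓ v) (hw : Differentiable ℝ w)
    (hw0 : ∀ x, 0 ≤ w x) (hwv : ∀ x, fderiv ℝ w x v = c * ℓ x * w x)
    (hu : Differentiable ℝ u) (hu2 : Integrable (fun x => u x ^ 2 * w x) μ)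
    (hdu : Integrable (fun x => fderiv ℝ u x v ^ 2 * w x) μ) :
    c * ∫ x, ℓ x * dampedId a (ℓ x) * (u x ^ 2 * w x) ∂μ =
      -∫ x, (dampedIdDeriv a (ℓ x) * ℓ v * u x ^ 2 +
        dampedId a (ℓ x) * (2 * u x * fderiv ℝ u x v)) * w x ∂μ := by
  have hf : Differentiable ℝ fun y => dampedId a (ℓ y) * u y ^ 2 :=
    ((differentiable_dampedId ha.le).comp ℓ.differentiable).mul (hu.pow 2)
  have hfw : ∀ x, dampedId a (ℓ x) * u x ^ 2 * fderiv ℝ w x v =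
      c * (ℓ x * dampedId a (ℓ x) * (u x ^ 2 * w x)) := fun x => by rw [hwv]; ring
  have hibp := integral_mul_fderiv_eq_neg_fderiv_mul_of_integrable (μ := μ) (v := v)
    (f := fun y => dampedId a (ℓ y) * u y ^ 2) (g := w)
    (by simpa only [fderiv_dampedId_comp_mul_sq_apply ha.le hu] using
      integrable_dampedIdDeriv_mul_add_mul ha hℓv hw.continuous hw0 hu hu2 hdu)
    (by simpa only [hfw] using (integrable_mul_dampedId_mul ha hu2).const_mul c)
    ((hu2.bdd_mul (c := 1 + a⁻¹) ((differentiable_dampedId ha.le).continuous.comp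
        ℓ.continuous).aestronglyMeasurable (.of_forall fun x => abs_dampedId_le ha _)).congr
      (.of_forall fun x => by simp only [Function.comp_apply]; ring))
    (fun x _ => hf x) (fun x _ => hw x)
  simpa only [hfw, integral_const_mul, fderiv_dampedId_comp_mul_sq_apply ha.le hu] using hibp

lemma integral_mul_dampedId_le (ha : 0 < a) (hℓv : 0 ≤ ℓ v) (hac : ℓ v * a < c)
    (hw : Differentiable ℝ w) (hw0 : ∀ x, 0 ≤ w x)
    (hwv : ∀ x, fderiv ℝ w x v = c * ℓ x * w x) (hu : Differentiable ℝ u)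
    (hu2 : Integrable (fun x => u x ^ 2 * w x) μ)
    (hdu : Integrable (fun x => fderiv ℝ u x v ^ 2 * w x) μ) :
    ∫ x, ℓ x * dampedId a (ℓ x) * (u x ^ 2 * w x) ∂μ ≤
      4 * (∫ x, fderiv ℝ u x v ^ 2 * w x ∂μ) / (c - ℓ v * a) ^ 2 := by
  set I := ∫ x, ℓ x * dampedId a (ℓ x) * (u x ^ 2 * w x) ∂μ
  set B := ∫ x, fderiv ℝ u x v ^ 2 * w x ∂μ
  set ε := (c - ℓ v * a) / 2 with hε_def
  have hε : 0 < ε := by rw [hε_def]; linarith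
  have hρ := integrable_mul_dampedId_mul (ℓ := ℓ) ha hu2
  have key : c * I ≤ (ℓ v * a + ε) * I + B / ε :=
    calc c * I = ∫ x, -((dampedIdDeriv a (ℓ x) * ℓ v * u x ^ 2 +
            dampedId a (ℓ x) * (2 * u x * fderiv ℝ u x v)) * w x) ∂μ := by
          rw [integral_neg, mul_integral_mul_dampedId_eq ha hℓv hw hw0 hwv hu hu2 hdu]
      _ ≤ ∫ x, ((ℓ v * a + ε) * (ℓ x * dampedId a (ℓ x) * (u x ^ 2 * w x)) +
            fderiv ℝ u x v ^ 2 * w x / ε) ∂μ := by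
        refine integral_mono
          (integrable_dampedIdDeriv_mul_add_mul ha hℓv hw.continuous hw0 hu hu2 hdu).neg
          ((hρ.const_mul _).add (hdu.div_const _)) fun x => ?_
        have := mul_le_mul_of_nonneg_right
          (neg_dampedIdDeriv_mul_add_le ha.le hℓv hε (ℓ x) (u x) (fderiv ℝ u x v)) (hw0 x)
        exact (le_of_eq (by ring)).trans (this.trans (le_of_eq (by ring)))
      _ = (ℓ v * a + ε) * I + B / ε := by
        rw [integral_add (hρ.const_mul _) (hdu.div_const _), integral_const_mul, integral_div]
  have hc : c = ℓ v * a + 2 * ε := by rw [hε_def]; ring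
  have hεI : ε * I * ε ≤ B := by
    rw [← le_div_iff₀ hε]
    linear_combination key - I * hc
  rw [show c - ℓ v * a = 2 * ε by linarith, le_div_iff₀ (by positivity)]
  linarith

theorem integrable_and_integral_sq_mul_weight_le (hc : 0 < c) (hℓv : 0 ≤ ℓ v)
    (hw : Differentiable ℝ w) (hw0 : ∀ x, 0 ≤ w x)
    (hwv : ∀ x, fderiv ℝ w x v = c * ℓ x * w x) (hu : Differentiable ℝ u)
    (hu2 : Integrable (fun x => u x ^ 2 * w x) μ)
    (hdu : Integrable (fun x => fderiv ℝ u x v ^ 2 * w x) μ) :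
    Integrable (fun x => (ℓ x * u x) ^ 2 * w x) μ ∧
      ∫ x, (ℓ x * u x) ^ 2 * w x ∂μ ≤ (2 / c) ^ 2 * ∫ x, fderiv ℝ u x v ^ 2 * w x ∂μ := by
  set B := ∫ x, fderiv ℝ u x v ^ 2 * w x ∂μ
  set a : ℕ → ℝ := fun n => c / (ℓ v + n + 1)
  have hden : ∀ n : ℕ, ℓ v < ℓ v + n + 1 := fun n => by linarith [n.cast_nonneg (α := ℝ)]
  have ha : ∀ n, 0 < a n := fun n => div_pos hc (hℓv.trans_lt (hden n))
  have hac : ∀ n, ℓ v * a n < c := fun n => by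
    rw [mul_div_assoc', div_lt_iff₀ (hℓv.trans_lt (hden n)), mul_comm]
    exact mul_lt_mul_of_pos_left (hden n) hc
  have ha0 : Tendsto a atTop (𝓝 0) := by
    refine tendsto_const_nhds.div_atTop (tendsto_atTop_add_const_right _ 1 ?_)
    exact tendsto_atTop_add_const_left _ _ tendsto_natCast_atTop_atTop
  have hb : Tendsto (fun n => 4 * B / (c - ℓ v * a n) ^ 2) atTop (𝓝 ((2 / c) ^ 2 * B)) := by
    have := (tendsto_const_nhds (x := 4 * B)).div
      (((tendsto_const_nhds (x := c)).sub (ha0.const_mul (ℓ v))).pow 2) (by simp [hc.ne'])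
    have hL : 4 * B / (c - ℓ v * 0) ^ 2 = (2 / c) ^ 2 * B := by
      rw [mul_zero, sub_zero, div_pow]; ring
    exact hL ▸ this
  refine integrable_and_integral_le_of_tendsto
    (f := fun n x => ℓ x * dampedId (a n) (ℓ x) * (u x ^ 2 * w x))
    (fun n => integrable_mul_dampedId_mul (ha n) hu2)
    (fun n => .of_forall fun x => mul_nonneg (mul_dampedId_nonneg (ha n).le _)
      (mul_nonneg (sq_nonneg _) (hw0 x)))
    (.of_forall fun x => ?_)
    (fun n => integral_mul_dampedId_le (ha n) hℓv (hac n) hw hw0 hwv hu hu2 hdu) hb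
  convert (tendsto_mul_dampedId ha0 (ℓ x)).mul_const (u x ^ 2 * w x) using 2
  ring

end WeightedHardy

section FiniteSums

variable {ι α : Type*} [Fintype ι] [MeasurableSpace α] {μ : Measure α} {f g : ι → α → ℝ}
  {w : α → ℝ}

lemma integrable_mul_of_integrable_sum_mul (h : Integrable (fun x => (∑ j, g j x) * w x) μ)
    (hg : ∀ j x, 0 ≤ g j x) (hw : ∀ x, 0 ≤ w x) {i : ι}
    (hm : AEStronglyMeasurable (fun x => g i x * w x) μ) :
    Integrable (fun x => g i x * w x) μ :=
  h.mono' hm (.of_forall fun x => by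
    rw [Real.norm_of_nonneg (mul_nonneg (hg i x) (hw x))]
    exact mul_le_mul_of_nonneg_right
      (Finset.single_le_sum (fun j _ => hg j x) (Finset.mem_univ i)) (hw x))

lemma integral_sum_mul_le {C : ℝ} (hf : ∀ i, Integrable (fun x => f i x * w x) μ)
    (hg : ∀ i, Integrable (fun x => g i x * w x) μ)
    (hfg : ∀ i, ∫ x, f i x * w x ∂μ ≤ C * ∫ x, g i x * w x ∂μ) :
    ∫ x, (∑ i, f i x) * w x ∂μ ≤ C * ∫ x, (∑ i, g i x) * w x ∂μ := by
  simp only [Finset.sum_mul]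
  rw [integral_finsetSum _ fun i _ => hf i, integral_finsetSum _ fun i _ => hg i,
    Finset.mul_sum]
  exact Finset.sum_le_sum fun i _ => hfg i

end FiniteSums

section Euclidean

variable {ι : Type*} [Fintype ι]

lemma fderiv_exp_mul_sum_mul_sq_apply_single [DecidableEq ι] (s : ℝ) (b : ι → ℝ)
    (x : EuclideanSpace ℝ ι) (i : ι) :
    fderiv ℝ (fun y : EuclideanSpace ℝ ι => exp (s * ∑ j, b j * y j ^ 2)) x
      (EuclideanSpace.single i 1) = 2 * s * b i * x i * exp (s * ∑ j, b j * x j ^ 2) := by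
  have hq := HasFDerivAt.fun_sum (u := Finset.univ) fun j _ =>
    (((EuclideanSpace.proj (𝕜 := ℝ) j).hasFDerivAt (x := x)).pow 2).const_mul (b j)
  rw [HasFDerivAt.fderiv (f := fun y : EuclideanSpace ℝ ι => exp (s * ∑ j, b j * y j ^ 2))
    (hq.const_mul s).exp]
  simp only [PiLp.proj_apply, Nat.add_one_sub_one, pow_one, nsmul_eq_mul, Nat.cast_ofNat,
    smul_apply, sum_apply, PiLp.single_apply, smul_eq_mul, mul_ite, mul_one, mul_zero,
    Finset.sum_ite_eq', Finset.mem_univ, ↓reduceIte]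
  ring

theorem integrable_and_integral_coord_sq_mul_le [DecidableEq ι] {θ : ℝ} (hθ : 0 < θ)
    {K σ : ι → ℝ} {i : ι} (hK : 0 ≤ K i) (hσ : σ i ≠ 0) {w : EuclideanSpace ℝ ι → ℝ}
    (hw : w = fun x => exp (θ / 2 * ∑ j, K j / σ j ^ 2 * x j ^ 2))
    {u : EuclideanSpace ℝ ι → ℝ} (hu : Differentiable ℝ u)
    (hu2 : Integrable (fun x => u x ^ 2 * w x))
    (hdu : Integrable (fun x => (σ i * fderiv ℝ u x (EuclideanSpace.single i 1)) ^ 2 * w x)) :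
    Integrable (fun x => (K i * x i / σ i * u x) ^ 2 * w x) ∧
      ∫ x, (K i * x i / σ i * u x) ^ 2 * w x ≤
        (2 / θ) ^ 2 * ∫ x, (σ i * fderiv ℝ u x (EuclideanSpace.single i 1)) ^ 2 * w x := by
  subst hw
  have hℓ : ∀ x, ((K i / σ i) • EuclideanSpace.proj i : _ →L[ℝ] ℝ) x * u x =
      K i * x i / σ i * u x := fun x => by
    simp only [smul_apply, smul_eq_mul, PiLp.proj_apply]; ring
  have hv : ∀ x, fderiv ℝ u x (σ i • EuclideanSpace.single i 1) =
      σ i * fderiv ℝ u x (EuclideanSpace.single i 1) := fun x => by simp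
  have h := integrable_and_integral_sq_mul_weight_le (μ := volume)
    (ℓ := (K i / σ i) • EuclideanSpace.proj i) (v := σ i • EuclideanSpace.single i 1)
    hθ ?_ (by fun_prop) (fun x => (exp_pos _).le) (fun x => ?_) hu hu2 (by simpa only [hv])
  · simpa only [hℓ, hv] using h
  · simpa [mul_div_cancel₀ _ hσ] using hK
  · rw [map_smul, fderiv_exp_mul_sum_mul_sq_apply_single]
    simp only [smul_eq_mul, smul_apply, PiLp.proj_apply]
    field_simp

end Euclidean

/-- Weighted estimate: for θ ∈ (0,1) and u ∈ H¹(w_θ), the function x ↦ σ⁻¹Kx·u(x) is in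
    L²(w_θ) and ‖σ⁻¹Kx u‖_{L²(w_θ)} ≤ (2/θ)‖σ∇u‖_{L²(w_θ)}. -/
theorem weighted_xu_estimate (d : ℕ) (θ : ℝ) (hθ : θ ∈ Set.Ioo (0 : ℝ) 1)
    (K σ : Fin d → ℝ) (hK : ∀ i, 0 < K i) (hσ : ∀ i, 0 < σ i)
    (w : EuclideanSpace ℝ (Fin d) → ℝ)
    (hw : w = fun x => Real.exp (θ / 2 * ∑ i, K i / (σ i) ^ 2 * (x i) ^ 2))
    (u : EuclideanSpace ℝ (Fin d) → ℝ) (hu : ContDiff ℝ 1 u)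
    (hu2 : Integrable (fun x => u x ^ 2 * w x))
    (hgrad : Integrable (fun x =>
      (∑ i, (σ i * fderiv ℝ u x (EuclideanSpace.single i (1 : ℝ))) ^ 2) * w x)) :
    Integrable (fun x : EuclideanSpace ℝ (Fin d) =>
        (∑ i, (K i * x i / σ i * u x) ^ 2) * w x) ∧
      Real.sqrt (∫ x : EuclideanSpace ℝ (Fin d),
          (∑ i, (K i * x i / σ i * u x) ^ 2) * w x) ≤
        (2 / θ) * Real.sqrt (∫ x : EuclideanSpace ℝ (Fin d),
          (∑ i, (σ i * fderiv ℝ u x (EuclideanSpace.single i (1 : ℝ))) ^ 2) * w x) := by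
  have hw0 : ∀ x, 0 ≤ w x := fun x => hw ▸ (exp_pos _).le
  have hwm : Measurable w := hw ▸ by fun_prop
  have hgrad_i : ∀ i, Integrable (fun x =>
      (σ i * fderiv ℝ u x (EuclideanSpace.single i 1)) ^ 2 * w x) := fun i =>
    integrable_mul_of_integrable_sum_mul hgrad (fun _ _ => sq_nonneg _) hw0
      (((measurable_fderiv_apply_const ℝ u _).const_mul _).pow_const 2 |>.mul
        hwm).aestronglyMeasurable
  have hcoord i := integrable_and_integral_coord_sq_mul_le hθ.1 (hK i).le (hσ i).ne' hw
    (hu.differentiable one_ne_zero) hu2 (hgrad_i i)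
  refine ⟨by simpa only [Finset.sum_mul] using integrable_finsetSum _ fun i _ => (hcoord i).1, ?_⟩
  calc _ ≤ √((2 / θ) ^ 2 *
          ∫ x, (∑ i, (σ i * fderiv ℝ u x (EuclideanSpace.single i 1)) ^ 2) * w x) :=
        Real.sqrt_le_sqrt (integral_sum_mul_le (fun i => (hcoord i).1) hgrad_i
          fun i => (hcoord i).2)
    _ = _ := by rw [Real.sqrt_mul (sq_nonneg _), Real.sqrt_sq (div_pos two_pos hθ.1).le]
end
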